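/- Let f : H → ℝ be increasing in its first argument, where H = {(x,y) ∈ ℝ² : x ≥ y}. Then ρ(X) = f(ES_p(X), E[X]) satisfies p-concentration aversion: for any X =_d X', Y =_d Y' in L^∞ with (X',Y') p-concentrated, ρ(X+Y) ≤ ρ(X'+Y'). -/

import Mathlib

open MeasureTheory ProbabilityTheory Filter
open scoped Classical

variable {Ω : Type*} [MeasurableSpace Ω]

/-- Left `s`-quantile (Value-at-Risk) of `X` under `μ`. -/
noncomputable def VaR (μ : Measure Ω) (X : Ω → ℝ) (s : ℝ) : ℝ :=
  sInf {x : ℝ | s ≤ (μ {ω | X ω ≤ x}).toReal}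

/-- Expected Shortfall at level `p`. -/
noncomputable def ES (μ : Measure Ω) (X : Ω → ℝ) (p : ℝ) : ℝ :=
  (1 - p)⁻¹ * ∫ s in Set.Ioo p 1, VaR μ X s

/-- `A` is a tail event of `X`. -/
def IsTailEvent (μ : Measure Ω) (X : Ω → ℝ) (A : Set Ω) : Prop :=
  MeasurableSet A ∧ 0 < μ A ∧ μ A < 1 ∧
    ∀ᵐ ω ∂μ.restrict A, ∀ᵐ ω' ∂μ.restrict Aᶜ, X ω' ≤ X ω

/-- `A` is a `p`-tail event of `X`: a tail event with probability `1 - p`. -/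
def IsPTailEvent (μ : Measure Ω) (p : ℝ) (X : Ω → ℝ) (A : Set Ω) : Prop :=
  IsTailEvent μ X A ∧ μ A = ENNReal.ofReal (1 - p)

/-- `(X, Y)` is `p`-concentrated: `X` and `Y` share a common `p`-tail event. -/
def PConcentrated (μ : Measure Ω) (p : ℝ) (X Y : Ω → ℝ) : Prop :=
  ∃ A, IsPTailEvent μ p X A ∧ IsPTailEvent μ p Y A

/-!
By the quantile transform, `∫_{(p,1)} VaR_s(X) ds` is the Rockafellar–Uryasev minimum of
`(1 - p) t + E (X - t)⁺` over `t`, attained at `t = VaR_p(X)`. This makes `ES_p` subadditive and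
gives `E X ≤ ES_p X`. Since `(X - t)⁺ ≥ 1_A (X - t)`, with a.e. equality when `t` separates the
values of `X` on `A` from those off `A`, the minimum equals `∫_A X` whenever `A` is a `p`-tail
event of `X`; so `ES_p` is additive on a `p`-concentrated pair. As `ES_p` and `E` only see laws,
`ES_p(X + Y) ≤ ES_p X + ES_p Y = ES_p(X' + Y')` with `E(X + Y) = E(X' + Y')`, and `f` is
increasing in its first argument on `{x ≥ y}`.
-/

open Set

section Quantile

variable {ν : Measure ℝ} {s : ℝ}

lemma nonempty_setOf_le_cdf (hs : s < 1) : {x | s ≤ cdf ν x}.Nonempty :=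
  ((tendsto_cdf_atTop ν).eventually_const_lt hs).exists.imp fun _ hx => hx.le

lemma bddBelow_setOf_le_cdf (hs : 0 < s) : BddBelow {x | s ≤ cdf ν x} := by
  obtain ⟨a, ha⟩ := eventually_atBot.mp ((tendsto_cdf_atBot ν).eventually_lt_const hs)
  exact ⟨a, fun x hx => le_of_not_gt fun hxa => (ha x hxa.le).not_ge hx⟩

lemma le_cdf_sInf_setOf_le_cdf [IsProbabilityMeasure ν] (hs : s ∈ Ioo 0 1) :
    s ≤ cdf ν (sInf {x | s ≤ cdf ν x}) := by
  set a := sInf {x | s ≤ cdf ν x}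
  refine ge_of_tendsto (((cdf ν).right_continuous a).mono Ioi_subset_Ici_self) ?_
  filter_upwards [self_mem_nhdsWithin] with y (hy : a < y)
  obtain ⟨z, hz, hzy⟩ := exists_lt_of_csInf_lt (nonempty_setOf_le_cdf hs.2) hy
  exact hz.trans ((cdf ν).mono hzy.le)

lemma sInf_setOf_le_cdf_le_iff [IsProbabilityMeasure ν] (hs : s ∈ Ioo 0 1) {x : ℝ} :
    sInf {y | s ≤ cdf ν y} ≤ x ↔ s ≤ cdf ν x :=
  ⟨fun h => (le_cdf_sInf_setOf_le_cdf hs).trans ((cdf ν).mono h),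
    fun h => csInf_le (bddBelow_setOf_le_cdf hs.1) h⟩

end Quantile

section VaR

variable {μ : Measure Ω} [IsProbabilityMeasure μ] {X : Ω → ℝ} {s x : ℝ}

lemma VaR_eq_sInf_cdf (hX : AEMeasurable X μ) (s : ℝ) :
    VaR μ X s = sInf {x | s ≤ cdf (μ.map X) x} := by
  have := Measure.isProbabilityMeasure_map (μ := μ) hX
  simp only [VaR, cdf_eq_real, measureReal_def,
    Measure.map_apply_of_aemeasurable hX measurableSet_Iic]
  rfl

lemma VaR_le_iff (hX : AEMeasurable X μ) (hs : s ∈ Ioo 0 1) :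
    VaR μ X s ≤ x ↔ s ≤ cdf (μ.map X) x := by
  have := Measure.isProbabilityMeasure_map (μ := μ) hX
  rw [VaR_eq_sInf_cdf hX, sInf_setOf_le_cdf_le_iff hs]

lemma monotoneOn_VaR (hX : AEMeasurable X μ) : MonotoneOn (VaR μ X) (Ioo 0 1) :=
  fun _ hs _ ht hst =>
    (VaR_le_iff hX hs).mpr (hst.trans ((VaR_le_iff hX ht).mp le_rfl))

lemma aemeasurable_VaR (hX : AEMeasurable X μ) :
    AEMeasurable (VaR μ X) (volume.restrict (Ioo 0 1)) :=
  aemeasurable_restrict_of_monotoneOn measurableSet_Ioo (monotoneOn_VaR hX)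

lemma volume_restrict_Ioo_zero_one_Iic {c : ℝ} (hc : c ≤ 1) :
    volume.restrict (Ioo 0 1) (Iic c) = ENNReal.ofReal c := by
  rw [Measure.restrict_congr_set Ioo_ae_eq_Ioc, Measure.restrict_apply measurableSet_Iic,
    inter_comm, Ioc_inter_Iic, inf_eq_right.mpr hc, Real.volume_Ioc, sub_zero]

lemma map_VaR (hX : AEMeasurable X μ) :
    (volume.restrict (Ioo 0 1)).map (VaR μ X) = μ.map X := by
  have := Measure.isProbabilityMeasure_map (μ := μ) hX
  have : IsProbabilityMeasure (volume.restrict (Ioo (0 : ℝ) 1)) :=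
    ⟨by rw [Measure.restrict_apply_univ, Real.volume_Ioo]; norm_num⟩
  have := Measure.isProbabilityMeasure_map (aemeasurable_VaR hX)
  refine Measure.ext_of_Iic _ _ fun x => ?_
  have hpre : VaR μ X ⁻¹' Iic x ∩ Ioo 0 1 = Iic (cdf (μ.map X) x) ∩ Ioo 0 1 := by
    ext s
    simp only [mem_inter_iff, mem_preimage, mem_Iic, and_congr_left_iff]
    exact fun hs => VaR_le_iff hX hs
  rw [Measure.map_apply_of_aemeasurable (aemeasurable_VaR hX) measurableSet_Iic,
    Measure.restrict_apply' measurableSet_Ioo, hpre, ← Measure.restrict_apply' measurableSet_Ioo,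
    volume_restrict_Ioo_zero_one_Iic (cdf_le_one _ _), ofReal_cdf]

lemma integral_comp_eq_setIntegral_VaR (hX : AEMeasurable X μ) {g : ℝ → ℝ}
    (hg : Measurable g) : ∫ ω, g (X ω) ∂μ = ∫ s in Ioo 0 1, g (VaR μ X s) := by
  rw [← integral_map hX hg.aestronglyMeasurable, ← map_VaR hX,
    integral_map (aemeasurable_VaR hX) (by rw [map_VaR hX]; exact hg.aestronglyMeasurable)]

lemma integrableOn_VaR (hX : Integrable X μ) : IntegrableOn (VaR μ X) (Ioo 0 1) := by
  have hid : Integrable id (μ.map X) :=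
    (integrable_map_measure aestronglyMeasurable_id hX.aemeasurable).mpr hX
  rw [← map_VaR hX.aemeasurable] at hid
  exact (integrable_map_measure aestronglyMeasurable_id (aemeasurable_VaR hX.aemeasurable)).mp hid

end VaR

section PositivePart

variable {μ : Measure Ω} {X : Ω → ℝ} {p t : ℝ} {A : Set Ω}

lemma integrable_posPart_sub_const [IsFiniteMeasure μ] (hX : Integrable X μ) (t : ℝ) :
    Integrable (fun ω => max (X ω - t) 0) μ :=
  (hX.sub (integrable_const t)).pos_part

lemma setIntegral_sub_le_integral_posPart [IsFiniteMeasure μ] (hX : Integrable X μ)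
    (hA : MeasurableSet A) (t : ℝ) : ∫ ω in A, (X ω - t) ∂μ ≤ ∫ ω, max (X ω - t) 0 ∂μ := by
  rw [← integral_indicator hA]
  refine integral_mono ((hX.sub (integrable_const t)).indicator hA)
    (integrable_posPart_sub_const hX t) fun ω => ?_
  by_cases h : ω ∈ A <;> simp [h]

lemma integral_posPart_sub_eq_setIntegral (hA : MeasurableSet A)
    (hXA : ∀ᵐ ω ∂μ.restrict A, t ≤ X ω) (hXAc : ∀ᵐ ω ∂μ.restrict Aᶜ, X ω ≤ t) :
    ∫ ω, max (X ω - t) 0 ∂μ = ∫ ω in A, (X ω - t) ∂μ := by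
  rw [ae_restrict_iff' hA] at hXA
  rw [ae_restrict_iff' hA.compl] at hXAc
  rw [← integral_indicator hA]
  refine integral_congr_ae ?_
  filter_upwards [hXA, hXAc] with ω hω hω'
  by_cases h : ω ∈ A
  · rw [indicator_of_mem h, max_eq_left (sub_nonneg.mpr (hω h))]
  · rw [indicator_of_notMem h, max_eq_right (sub_nonpos.mpr (hω' h))]

lemma setIntegral_eq_mul_add_setIntegral_sub (hX : Integrable X μ) (hp : p ≤ 1)
    (hμA : μ A = ENNReal.ofReal (1 - p)) (t : ℝ) :
    ∫ ω in A, X ω ∂μ = (1 - p) * t + ∫ ω in A, (X ω - t) ∂μ := by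
  rw [integral_sub hX.integrableOn (integrableOn_const (by simp [hμA])), setIntegral_const,
    measureReal_def, hμA, ENNReal.toReal_ofReal (sub_nonneg.mpr hp), smul_eq_mul]
  ring

end PositivePart

noncomputable def rockafellarUryasev (μ : Measure Ω) (X : Ω → ℝ) (p t : ℝ) : ℝ :=
  t + (1 - p)⁻¹ * ∫ ω, max (X ω - t) 0 ∂μ

section ExpectedShortfall

variable {μ : Measure Ω} [IsProbabilityMeasure μ] {X Y : Ω → ℝ} {p : ℝ}

lemma setIntegral_Ioo_eq_setIntegral_indicator (hp : p ∈ Ioo 0 1) (f : ℝ → ℝ) :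
    ∫ s in Ioo p 1, f s = ∫ s in Ioo 0 1, (Ioo p 1).indicator f s := by
  rw [setIntegral_indicator measurableSet_Ioo, inter_eq_right.mpr (Ioo_subset_Ioo_left hp.1.le)]

lemma setIntegral_Ioo_VaR_sub_le (hX : Integrable X μ) (hp : p ∈ Ioo 0 1) (t : ℝ) :
    ∫ s in Ioo p 1, (VaR μ X s - t) ≤ ∫ ω, max (X ω - t) 0 ∂μ := by
  have hint : IntegrableOn (fun s => VaR μ X s - t) (Ioo 0 1) :=
    (integrableOn_VaR hX).sub (integrableOn_const (by simp))
  rw [setIntegral_Ioo_eq_setIntegral_indicator hp,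
    integral_comp_eq_setIntegral_VaR hX.aemeasurable (g := fun x => max (x - t) 0) (by fun_prop)]
  refine setIntegral_mono_on (hint.indicator measurableSet_Ioo) hint.pos_part measurableSet_Ioo
    fun s _ => ?_
  by_cases hs : s ∈ Ioo p 1 <;> simp [hs]

lemma setIntegral_Ioo_VaR_sub_VaR (hX : AEMeasurable X μ) (hp : p ∈ Ioo 0 1) :
    ∫ s in Ioo p 1, (VaR μ X s - VaR μ X p) = ∫ ω, max (X ω - VaR μ X p) 0 ∂μ := by
  rw [setIntegral_Ioo_eq_setIntegral_indicator hp,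
    integral_comp_eq_setIntegral_VaR hX (g := fun x => max (x - VaR μ X p) 0) (by fun_prop)]
  refine setIntegral_congr_fun measurableSet_Ioo fun s hs => ?_
  by_cases hps : p < s
  · rw [indicator_of_mem (show s ∈ Ioo p 1 from ⟨hps, hs.2⟩),
      max_eq_left (sub_nonneg.mpr (monotoneOn_VaR hX hp hs hps.le))]
  · rw [indicator_of_notMem fun h => hps h.1,
      max_eq_right (sub_nonpos.mpr (monotoneOn_VaR hX hs hp (not_lt.mp hps)))]

lemma ES_eq_add_setIntegral_sub (hX : Integrable X μ) (hp : p ∈ Ioo 0 1) (t : ℝ) :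
    ES μ X p = t + (1 - p)⁻¹ * ∫ s in Ioo p 1, (VaR μ X s - t) := by
  have h1p : 1 - p ≠ 0 := sub_ne_zero.mpr hp.2.ne'
  rw [ES, integral_sub ((integrableOn_VaR hX).mono_set (Ioo_subset_Ioo_left hp.1.le))
    (integrableOn_const (by simp)), setIntegral_const, Real.volume_real_Ioo_of_le hp.2.le,
    smul_eq_mul]
  field_simp
  ring

theorem ES_le_rockafellarUryasev (hX : Integrable X μ) (hp : p ∈ Ioo 0 1) (t : ℝ) :
    ES μ X p ≤ rockafellarUryasev μ X p t := by
  rw [ES_eq_add_setIntegral_sub hX hp t, rockafellarUryasev]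
  gcongr
  · exact inv_nonneg.mpr (sub_nonneg.mpr hp.2.le)
  · exact setIntegral_Ioo_VaR_sub_le hX hp t

theorem ES_eq_rockafellarUryasev_VaR (hX : Integrable X μ) (hp : p ∈ Ioo 0 1) :
    ES μ X p = rockafellarUryasev μ X p (VaR μ X p) := by
  rw [ES_eq_add_setIntegral_sub hX hp (VaR μ X p), rockafellarUryasev,
    setIntegral_Ioo_VaR_sub_VaR hX.aemeasurable hp]

theorem integral_le_ES (hX : Integrable X μ) (hp : p ∈ Ioo 0 1) : ∫ ω, X ω ∂μ ≤ ES μ X p := by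
  set q := VaR μ X p
  have hpos : 0 ≤ ∫ ω, max (X ω - q) 0 ∂μ := integral_nonneg fun _ => le_max_right _ _
  have hinv : 1 ≤ (1 - p)⁻¹ := one_le_inv₀ (by linarith [hp.2]) |>.mpr (by linarith [hp.1])
  calc ∫ ω, X ω ∂μ = q + ∫ ω, (X ω - q) ∂μ := by
        rw [integral_sub hX (integrable_const q), integral_const, probReal_univ, one_smul]
        ring
    _ ≤ q + ∫ ω, max (X ω - q) 0 ∂μ := by
        gcongr
        exacts [hX.sub (integrable_const q), integrable_posPart_sub_const hX q,
          fun _ => le_max_left _ _]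
    _ ≤ q + (1 - p)⁻¹ * ∫ ω, max (X ω - q) 0 ∂μ := by
        gcongr
        exact le_mul_of_one_le_left hpos hinv
    _ = ES μ X p := (ES_eq_rockafellarUryasev_VaR hX hp).symm

theorem ES_add_le (hX : Integrable X μ) (hY : Integrable Y μ) (hp : p ∈ Ioo 0 1) :
    ES μ (X + Y) p ≤ ES μ X p + ES μ Y p := by
  set a := VaR μ X p
  set b := VaR μ Y p
  have hXa := integrable_posPart_sub_const hX a
  have hYb := integrable_posPart_sub_const hY b
  have hsum : ∫ ω, max ((X + Y) ω - (a + b)) 0 ∂μ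
      ≤ ∫ ω, max (X ω - a) 0 ∂μ + ∫ ω, max (Y ω - b) 0 ∂μ := by
    rw [← integral_add hXa hYb]
    refine integral_mono (integrable_posPart_sub_const (hX.add hY) _) (hXa.add hYb)
      fun ω => max_le ?_ (by positivity)
    simp only [Pi.add_apply]
    linarith [le_max_left (X ω - a) 0, le_max_left (Y ω - b) 0]
  calc ES μ (X + Y) p ≤ a + b + (1 - p)⁻¹ * ∫ ω, max ((X + Y) ω - (a + b)) 0 ∂μ :=
        ES_le_rockafellarUryasev (hX.add hY) hp (a + b)
    _ ≤ a + b + (1 - p)⁻¹ * (∫ ω, max (X ω - a) 0 ∂μ + ∫ ω, max (Y ω - b) 0 ∂μ) := by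
        gcongr
        exact inv_nonneg.mpr (sub_nonneg.mpr hp.2.le)
    _ = ES μ X p + ES μ Y p := by
        rw [ES_eq_rockafellarUryasev_VaR hX hp, ES_eq_rockafellarUryasev_VaR hY hp,
          rockafellarUryasev, rockafellarUryasev]
        ring

end ExpectedShortfall

section TailEvents

variable {μ : Measure Ω} {X Y : Ω → ℝ} {p t : ℝ} {A : Set Ω}

lemma IsTailEvent.add (hX : IsTailEvent μ X A) (hY : IsTailEvent μ Y A) :
    IsTailEvent μ (X + Y) A := by
  refine ⟨hX.1, hX.2.1, hX.2.2.1, ?_⟩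
  filter_upwards [hX.2.2.2, hY.2.2.2] with ω hXω hYω
  filter_upwards [hXω, hYω] with ω' hXω' hYω'
  exact add_le_add hXω' hYω'

lemma IsPTailEvent.add (hX : IsPTailEvent μ p X A) (hY : IsPTailEvent μ p Y A) :
    IsPTailEvent μ p (X + Y) A :=
  ⟨hX.1.add hY.1, hX.2⟩

/-- The threshold is the essential supremum of `X` off `A`, taken in `EReal`; it is finite
because both `A` and its complement have positive measure. -/
lemma IsTailEvent.exists_threshold [IsProbabilityMeasure μ] (hA : IsTailEvent μ X A) :
    ∃ t : ℝ, (∀ᵐ ω ∂μ.restrict A, t ≤ X ω) ∧ ∀ᵐ ω ∂μ.restrict Aᶜ, X ω ≤ t := by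
  obtain ⟨hAm, hA₀, hA₁, htail⟩ := hA
  have : (ae (μ.restrict A)).NeBot := by simpa [Measure.restrict_apply_univ] using hA₀.ne'
  have : (ae (μ.restrict Aᶜ)).NeBot := by
    simpa [Measure.restrict_apply_univ, prob_compl_eq_one_sub hAm] using (tsub_pos_of_lt hA₁).ne'
  set T : EReal := essSup (fun ω => (X ω : EReal)) (μ.restrict Aᶜ)
  have hle : ∀ᵐ ω ∂μ.restrict Aᶜ, (X ω : EReal) ≤ T := ae_le_essSup
  have hge : ∀ᵐ ω ∂μ.restrict A, T ≤ X ω :=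
    htail.mono fun ω h => essSup_le_of_ae_le _ (h.mono fun _ h' => EReal.coe_le_coe_iff.mpr h')
  obtain ⟨ω₀, hω₀⟩ := hge.exists
  obtain ⟨ω₁, hω₁⟩ := hle.exists
  have hT : (T.toReal : EReal) = T :=
    EReal.coe_toReal (hω₀.trans_lt (EReal.coe_lt_top _)).ne
      ((EReal.bot_lt_coe _).trans_le hω₁).ne'
  refine ⟨T.toReal, hge.mono fun ω h => ?_, hle.mono fun ω h => ?_⟩
  · rwa [← EReal.coe_le_coe_iff, hT]
  · rwa [← EReal.coe_le_coe_iff, hT]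

end TailEvents

section ConcentratedPairs

variable {μ : Measure Ω} [IsProbabilityMeasure μ] {X Y : Ω → ℝ} {p : ℝ} {A : Set Ω}

theorem inv_mul_setIntegral_le_ES (hX : Integrable X μ) (hp : p ∈ Ioo 0 1)
    (hA : MeasurableSet A) (hμA : μ A = ENNReal.ofReal (1 - p)) :
    (1 - p)⁻¹ * ∫ ω in A, X ω ∂μ ≤ ES μ X p := by
  have h1p : 1 - p ≠ 0 := sub_ne_zero.mpr hp.2.ne'
  calc (1 - p)⁻¹ * ∫ ω in A, X ω ∂μ
      = VaR μ X p + (1 - p)⁻¹ * ∫ ω in A, (X ω - VaR μ X p) ∂μ := by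
        rw [setIntegral_eq_mul_add_setIntegral_sub hX hp.2.le hμA (VaR μ X p), mul_add,
          inv_mul_cancel_left₀ h1p]
    _ ≤ VaR μ X p + (1 - p)⁻¹ * ∫ ω, max (X ω - VaR μ X p) 0 ∂μ := by
        gcongr
        · exact inv_nonneg.mpr (sub_nonneg.mpr hp.2.le)
        · exact setIntegral_sub_le_integral_posPart hX hA _
    _ = ES μ X p := (ES_eq_rockafellarUryasev_VaR hX hp).symm

theorem ES_eq_of_isPTailEvent (hX : Integrable X μ) (hp : p ∈ Ioo 0 1)
    (hA : IsPTailEvent μ p X A) : ES μ X p = (1 - p)⁻¹ * ∫ ω in A, X ω ∂μ := by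
  obtain ⟨hAX, hμA⟩ := hA
  obtain ⟨t, hXA, hXAc⟩ := hAX.exists_threshold
  refine le_antisymm ?_ (inv_mul_setIntegral_le_ES hX hp hAX.1 hμA)
  calc ES μ X p ≤ rockafellarUryasev μ X p t := ES_le_rockafellarUryasev hX hp t
    _ = (1 - p)⁻¹ * ∫ ω in A, X ω ∂μ := by
        rw [rockafellarUryasev, integral_posPart_sub_eq_setIntegral hAX.1 hXA hXAc,
          setIntegral_eq_mul_add_setIntegral_sub hX hp.2.le hμA t, mul_add,
          inv_mul_cancel_left₀ (sub_ne_zero.mpr hp.2.ne')]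

theorem PConcentrated.ES_add (h : PConcentrated μ p X Y) (hX : Integrable X μ)
    (hY : Integrable Y μ) (hp : p ∈ Ioo 0 1) : ES μ (X + Y) p = ES μ X p + ES μ Y p := by
  obtain ⟨A, hXA, hYA⟩ := h
  rw [ES_eq_of_isPTailEvent (hX.add hY) hp (hXA.add hYA), ES_eq_of_isPTailEvent hX hp hXA,
    ES_eq_of_isPTailEvent hY hp hYA, ← mul_add, ← integral_add hX.integrableOn hY.integrableOn]
  rfl

end ConcentratedPairs

theorem ProbabilityTheory.IdentDistrib.VaR_eq {Ω' : Type*} [MeasurableSpace Ω'] {μ : Measure Ω}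
    {ν : Measure Ω'} {X : Ω → ℝ} {Y : Ω' → ℝ} (h : IdentDistrib X Y μ ν) : VaR μ X = VaR ν Y := by
  have hcdf (x : ℝ) : μ {ω | X ω ≤ x} = ν {ω | Y ω ≤ x} := h.measure_mem_eq measurableSet_Iic
  funext s
  simp only [VaR, hcdf]

theorem ProbabilityTheory.IdentDistrib.ES_eq {Ω' : Type*} [MeasurableSpace Ω'] {μ : Measure Ω}
    {ν : Measure Ω'} {X : Ω → ℝ} {Y : Ω' → ℝ} (h : IdentDistrib X Y μ ν) (p : ℝ) :
    ES μ X p = ES ν Y p := by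
  rw [ES, ES, h.VaR_eq]

/-- `ρ = f(ES_p, E)` with `f` increasing in its first argument on
`H = {(x,y) : x ≥ y}` satisfies `p`-concentration aversion. -/
theorem stmt18 (μ : Measure Ω) [IsProbabilityMeasure μ] (p : ℝ) (hp : p ∈ Set.Ioo (0:ℝ) 1)
    (f : ℝ → ℝ → ℝ)
    (hf : ∀ x x' y : ℝ, y ≤ x → x ≤ x' → f x y ≤ f x' y) :
    ∀ X Y X' Y' : Ω → ℝ, MemLp X ⊤ μ → MemLp Y ⊤ μ → MemLp X' ⊤ μ → MemLp Y' ⊤ μ →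
      IdentDistrib X X' μ μ → IdentDistrib Y Y' μ μ → PConcentrated μ p X' Y' →
      f (ES μ (X + Y) p) (∫ ω, (X + Y) ω ∂μ) ≤
        f (ES μ (X' + Y') p) (∫ ω, (X' + Y') ω ∂μ) := by
  intro X Y X' Y' hX hY hX' hY' hXX' hYY' hXY'
  replace hX := hX.integrable le_top
  replace hY := hY.integrable le_top
  replace hX' := hX'.integrable le_top
  replace hY' := hY'.integrable le_top
  have hES : ES μ (X + Y) p ≤ ES μ (X' + Y') p :=
    calc ES μ (X + Y) p ≤ ES μ X p + ES μ Y p := ES_add_le hX hY hp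
      _ = ES μ X' p + ES μ Y' p := by rw [hXX'.ES_eq, hYY'.ES_eq]
      _ = ES μ (X' + Y') p := (hXY'.ES_add hX' hY' hp).symm
  have hmean : ∫ ω, (X + Y) ω ∂μ = ∫ ω, (X' + Y') ω ∂μ := by
    simp only [Pi.add_apply]
    rw [integral_add hX hY, integral_add hX' hY', hXX'.integral_eq, hYY'.integral_eq]
  rw [← hmean]
  exact hf _ _ _ (integral_le_ES (hX.add hY) hp) hES
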